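/- If ρ_{ABC} = ⨁_j λ_j ρ_{A b_j^L} ⊗ ρ_{b_j^R C} with respect to a direct sum decomposition H_B = ⨁_j H_{b_j^L} ⊗ H_{b_j^R}, where {λ_j} is a probability distribution and ρ_{A b_j^L}, ρ_{b_j^R C} are density matrices, then ρ_{ABC} saturates strong subadditivity: S(ρ_{AB}) + S(ρ_{BC}) = S(ρ_{ABC}) + S(ρ_B). (Sufficiency direction of the SSA saturation condition.) -/

import Mathlib

open Matrix Kronecker BigOperators
open scoped ComplexOrder

noncomputable section

/-- Partial trace over the second (right) tensor factor. -/
def ptraceRight {m n : Type*} [Fintype n]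
    (ρ : Matrix (m × n) (m × n) ℂ) : Matrix m m ℂ :=
  fun i j => ∑ k : n, ρ (i, k) (j, k)

/-- Partial trace over the first (left) tensor factor. -/
def ptraceLeft {m n : Type*} [Fintype m]
    (ρ : Matrix (m × n) (m × n) ℂ) : Matrix n n ℂ :=
  fun i j => ∑ k : m, ρ (k, i) (k, j)

/-- Partial trace of a tripartite state over the last factor. -/
def trC {a b c : Type*} [Fintype c]
    (ρ : Matrix (a × b × c) (a × b × c) ℂ) : Matrix (a × b) (a × b) ℂ :=
  fun i j => ∑ k : c, ρ (i.1, i.2, k) (j.1, j.2, k)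

/-- Partial trace of a tripartite state over the first and last factors. -/
def trAC {a b c : Type*} [Fintype a] [Fintype c]
    (ρ : Matrix (a × b × c) (a × b × c) ℂ) : Matrix b b ℂ :=
  fun i j => ∑ x : a, ∑ k : c, ρ (x, i, k) (x, j, k)

/-- A density matrix: positive semidefinite with unit trace. -/
def IsDensity {n : Type*} [Fintype n] (ρ : Matrix n n ℂ) : Prop :=
  ρ.PosSemidef ∧ ρ.trace = 1

/-- Von Neumann entropy `S(ρ) = -Tr (ρ log ρ)`, computed from the eigenvalues. -/
def vNEntropy {n : Type*} [Fintype n] [DecidableEq n] (ρ : Matrix n n ℂ) : ℝ :=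
  if h : ρ.IsHermitian then -∑ i, (h.eigenvalues i * Real.log (h.eigenvalues i)) else 0

/-- `Φ ⊗ 1` : a map on the first tensor factor extended by the identity. -/
def tensorId {h h' k : Type*}
    (Φ : Matrix h h ℂ → Matrix h' h' ℂ)
    (ρ : Matrix (h × k) (h × k) ℂ) : Matrix (h' × k) (h' × k) ℂ :=
  fun i j => Φ (fun x y => ρ (x, i.2) (y, j.2)) i.1 j.1

/-- `1 ⊗ Φ` : a map on the second tensor factor extended by the identity. -/
def idTensor {h h' k : Type*}
    (Φ : Matrix h h ℂ → Matrix h' h' ℂ)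
    (ρ : Matrix (k × h) (k × h) ℂ) : Matrix (k × h') (k × h') ℂ :=
  fun i j => Φ (fun x y => ρ (i.1, x) (j.1, y)) i.2 j.2

/-- A quantum channel: linear, trace preserving and completely positive map. -/
structure QChannel (m n : Type*) [Fintype m] [Fintype n] where
  map : Matrix m m ℂ → Matrix n n ℂ
  linear : ∀ (a b : ℂ) (ρ σ : Matrix m m ℂ), map (a • ρ + b • σ) = a • map ρ + b • map σ
  trace_preserving : ∀ ρ : Matrix m m ℂ, (map ρ).trace = ρ.trace
  completely_positive : ∀ (d : ℕ) (ρ : Matrix (m × Fin d) (m × Fin d) ℂ),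
    ρ.PosSemidef → (tensorId map ρ).PosSemidef

/-- Pure state projector `|v⟩⟨v|`. -/
def proj {n : Type*} (v : n → ℂ) : Matrix n n ℂ := Matrix.vecMulVec v (star v)

/-- Unit vector. -/
def IsUnit' {n : Type*} [Fintype n] (v : n → ℂ) : Prop := ∑ i, Complex.normSq (v i) = 1

/-!
After reordering tensor factors, each of `ρ_ABC`, `ρ_AB`, `ρ_BC`, `ρ_B` is a block-diagonal matrix
`⨁_j λ_j X_j ⊗ Y_j`, with `X_j` either `ρ_{A b_j^L}` or its marginal on `b_j^L` and `Y_j` either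
`ρ_{b_j^R C}` or its marginal on `b_j^R`. Its spectrum is `{λ_j x y}` with `x`, `y` running over the
spectra of `X_j`, `Y_j`, so its entropy is `H(λ) + ∑_j λ_j (S(X_j) + S(Y_j))`. Summing, both sides
of the saturation identity equal
`2 H(λ) + ∑_j λ_j (S(ρ_{A b_j^L}) + S(ρ_{b_j^L}) + S(ρ_{b_j^R C}) + S(ρ_{b_j^R}))`.
-/

open Polynomial Real

section Entropy

variable {m n : Type*} [Fintype m] [DecidableEq m] [Fintype n] [DecidableEq n]

lemma vNEntropy_eq_sum_negMulLog {A : Matrix n n ℂ} (hA : A.IsHermitian) :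
    vNEntropy A = ∑ i, negMulLog (hA.eigenvalues i) := by
  simp [vNEntropy, hA, negMulLog]

lemma vNEntropy_eq_sum_roots_charpoly {A : Matrix n n ℂ} (hA : A.IsHermitian) :
    vNEntropy A = (A.charpoly.roots.map fun z => negMulLog z.re).sum := by
  rw [vNEntropy_eq_sum_negMulLog hA, hA.roots_charpoly_eq_eigenvalues, Multiset.map_map]
  simp

lemma vNEntropy_submatrix_equiv (A : Matrix n n ℂ) (e : m ≃ n) :
    vNEntropy (A.submatrix e e) = vNEntropy A := by
  by_cases hA : A.IsHermitian
  · rw [vNEntropy_eq_sum_roots_charpoly hA, vNEntropy_eq_sum_roots_charpoly (hA.submatrix e),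
      ← charpoly_reindex e.symm]
    rfl
  · have hA' : ¬(A.submatrix e e).IsHermitian := fun h => hA (by simpa using h.submatrix e.symm)
    simp [vNEntropy, hA, hA']

lemma Matrix.IsHermitian.eq_eigenvectorUnitary_mul_diagonal_mul_star {A : Matrix n n ℂ}
    (hA : A.IsHermitian) :
    A = (hA.eigenvectorUnitary : Matrix n n ℂ) * diagonal (fun i => (hA.eigenvalues i : ℂ)) *
      star (hA.eigenvectorUnitary : Matrix n n ℂ) := by
  conv_lhs => rw [hA.spectral_theorem]
  rfl

lemma vNEntropy_unitary_mul_diagonal_mul_star {U : Matrix n n ℂ} (hU : U ∈ unitaryGroup n ℂ)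
    (d : n → ℝ) :
    vNEntropy (U * diagonal (fun i => (d i : ℂ)) * star U) = ∑ i, negMulLog (d i) := by
  have hD : (diagonal fun i => (d i : ℂ)).IsHermitian :=
    isHermitian_diagonal_of_self_adjoint _ (by ext; simp)
  have hM : (U * diagonal (fun i => (d i : ℂ)) * star U).IsHermitian := by
    simpa [star_eq_conjTranspose] using isHermitian_mul_mul_conjTranspose U hD
  rw [vNEntropy_eq_sum_roots_charpoly hM, charpoly_mul_comm, ← Matrix.mul_assoc,
    (Unitary.mem_iff.mp hU).1, Matrix.one_mul, charpoly_diagonal, roots_prod _ _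
      (Finset.prod_ne_zero_iff.mpr fun i _ => X_sub_C_ne_zero _)]
  simp

lemma vNEntropy_kronecker {A : Matrix m m ℂ} {B : Matrix n n ℂ} (hA : A.IsHermitian)
    (hB : B.IsHermitian) :
    vNEntropy (A ⊗ₖ B) = B.trace.re * vNEntropy A + A.trace.re * vNEntropy B := by
  have hAB : A ⊗ₖ B = ((hA.eigenvectorUnitary : Matrix m m ℂ) ⊗ₖ hB.eigenvectorUnitary) *
      diagonal (fun s : m × n => ((hA.eigenvalues s.1 * hB.eigenvalues s.2 : ℝ) : ℂ)) *
        star ((hA.eigenvectorUnitary : Matrix m m ℂ) ⊗ₖ hB.eigenvectorUnitary) := by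
    conv_lhs => rw [hA.eq_eigenvectorUnitary_mul_diagonal_mul_star,
      hB.eq_eigenvectorUnitary_mul_diagonal_mul_star]
    simp only [mul_kronecker_mul, diagonal_kronecker_diagonal, star_eq_conjTranspose,
      conjTranspose_kronecker, Complex.ofReal_mul]
  rw [hAB, vNEntropy_unitary_mul_diagonal_mul_star
      (kronecker_mem_unitary hA.eigenvectorUnitary.2 hB.eigenvectorUnitary.2),
    vNEntropy_eq_sum_negMulLog hA, vNEntropy_eq_sum_negMulLog hB, hA.trace_eq_sum_eigenvalues,
    hB.trace_eq_sum_eigenvalues, Fintype.sum_prod_type]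
  simp only [negMulLog_mul, Finset.sum_add_distrib, ← Finset.mul_sum, ← Finset.sum_mul]
  simp

lemma vNEntropy_real_smul {A : Matrix n n ℂ} (hA : A.IsHermitian) (c : ℝ) :
    vNEntropy ((c : ℂ) • A) = A.trace.re * negMulLog c + c * vNEntropy A := by
  have hcA : (c : ℂ) • A = (hA.eigenvectorUnitary : Matrix n n ℂ) *
      diagonal (fun i => ((c * hA.eigenvalues i : ℝ) : ℂ)) *
        star (hA.eigenvectorUnitary : Matrix n n ℂ) := by
    conv_lhs => rw [hA.eq_eigenvectorUnitary_mul_diagonal_mul_star]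
    rw [← Matrix.smul_mul, ← Matrix.mul_smul, ← diagonal_smul]
    simp only [Complex.ofReal_mul]
    rfl
  rw [hcA, vNEntropy_unitary_mul_diagonal_mul_star hA.eigenvectorUnitary.2,
    vNEntropy_eq_sum_negMulLog hA, hA.trace_eq_sum_eigenvalues]
  simp [negMulLog_mul, Finset.sum_add_distrib, Finset.mul_sum, Finset.sum_mul]

variable {ι : Type*} [Fintype ι] [DecidableEq ι] {p : ι → Type*} [∀ j, Fintype (p j)]
  [∀ j, DecidableEq (p j)]

lemma blockDiagonal'_mem_unitaryGroup {U : ∀ j, Matrix (p j) (p j) ℂ}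
    (hU : ∀ j, U j ∈ unitaryGroup (p j) ℂ) : blockDiagonal' U ∈ unitaryGroup (Σ j, p j) ℂ := by
  rw [Unitary.mem_iff, star_eq_conjTranspose, blockDiagonal'_conjTranspose,
    ← blockDiagonal'_mul, ← blockDiagonal'_mul]
  simp only [← star_eq_conjTranspose, Unitary.star_mul_self_of_mem (hU _),
    Unitary.mul_star_self_of_mem (hU _)]
  exact ⟨blockDiagonal'_one, blockDiagonal'_one⟩

lemma vNEntropy_blockDiagonal' {M : ∀ j, Matrix (p j) (p j) ℂ}
    (hM : ∀ j, (M j).IsHermitian) :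
    vNEntropy (blockDiagonal' M) = ∑ j, vNEntropy (M j) := by
  have hMU : blockDiagonal' M =
      blockDiagonal' (fun j => ((hM j).eigenvectorUnitary : Matrix (p j) (p j) ℂ)) *
        diagonal (fun s => ((hM s.1).eigenvalues s.2 : ℂ)) *
        star (blockDiagonal' fun j => ((hM j).eigenvectorUnitary : Matrix (p j) (p j) ℂ)) := by
    conv_lhs => rw [show M = fun j => _ from funext fun j =>
      (hM j).eq_eigenvectorUnitary_mul_diagonal_mul_star]
    rw [← blockDiagonal'_diagonal fun j i => ((hM j).eigenvalues i : ℂ), star_eq_conjTranspose,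
      blockDiagonal'_conjTranspose, ← blockDiagonal'_mul, ← blockDiagonal'_mul]
    simp only [star_eq_conjTranspose]
  rw [hMU, vNEntropy_unitary_mul_diagonal_mul_star
      (blockDiagonal'_mem_unitaryGroup fun j => (hM j).eigenvectorUnitary.2), Fintype.sum_sigma]
  simp only [vNEntropy_eq_sum_negMulLog (hM _)]

end Entropy

lemma Matrix.IsHermitian.kronecker {m n : Type*} {A : Matrix m m ℂ} {B : Matrix n n ℂ}
    (hA : A.IsHermitian) (hB : B.IsHermitian) : (A ⊗ₖ B).IsHermitian := by
  rw [IsHermitian, conjTranspose_kronecker, hA, hB]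

lemma Matrix.IsHermitian.ptraceRight {m n : Type*} [Fintype n] {A : Matrix (m × n) (m × n) ℂ}
    (hA : A.IsHermitian) : (ptraceRight A).IsHermitian := by
  ext i j
  simp only [_root_.ptraceRight, conjTranspose_apply, star_sum, hA.apply]

lemma Matrix.IsHermitian.ptraceLeft {m n : Type*} [Fintype m] {A : Matrix (m × n) (m × n) ℂ}
    (hA : A.IsHermitian) : (ptraceLeft A).IsHermitian := by
  ext i j
  simp only [_root_.ptraceLeft, conjTranspose_apply, star_sum, hA.apply]

lemma trace_ptraceRight {m n : Type*} [Fintype m] [Fintype n] (A : Matrix (m × n) (m × n) ℂ) :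
    (ptraceRight A).trace = A.trace := by
  simp [ptraceRight, trace, Fintype.sum_prod_type]

lemma trace_ptraceLeft {m n : Type*} [Fintype m] [Fintype n] (A : Matrix (m × n) (m × n) ℂ) :
    (ptraceLeft A).trace = A.trace := by
  simp [ptraceLeft, trace, Fintype.sum_prod_type_right]

section BlockState

variable {ι : Type*} [DecidableEq ι] {α β : ι → Type*}

def blockState (lam : ι → ℝ) (X : ∀ j, Matrix (α j) (α j) ℂ) (Y : ∀ j, Matrix (β j) (β j) ℂ) :
    Matrix (Σ j, α j × β j) (Σ j, α j × β j) ℂ :=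
  blockDiagonal' fun j => (lam j : ℂ) • (X j ⊗ₖ Y j)

lemma vNEntropy_blockState [Fintype ι] [∀ j, Fintype (α j)] [∀ j, DecidableEq (α j)]
    [∀ j, Fintype (β j)] [∀ j, DecidableEq (β j)] (lam : ι → ℝ) {X : ∀ j, Matrix (α j) (α j) ℂ}
    {Y : ∀ j, Matrix (β j) (β j) ℂ} (hX : ∀ j, (X j).IsHermitian) (hXtr : ∀ j, (X j).trace = 1)
    (hY : ∀ j, (Y j).IsHermitian) (hYtr : ∀ j, (Y j).trace = 1) :
    vNEntropy (blockState lam X Y) =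
      ∑ j, (negMulLog (lam j) + lam j * (vNEntropy (X j) + vNEntropy (Y j))) := by
  rw [blockState, vNEntropy_blockDiagonal' fun j =>
    ((hX j).kronecker (hY j)).smul (Complex.conj_ofReal (lam j))]
  refine Finset.sum_congr rfl fun j _ => ?_
  rw [vNEntropy_real_smul ((hX j).kronecker (hY j)), vNEntropy_kronecker (hX j) (hY j),
    trace_kronecker, hXtr, hYtr]
  simp

variable (a c : Type*)

def tripartiteBlockEquiv : a × (Σ j, α j × β j) × c ≃ Σ j, (a × α j) × (β j × c) where
  toFun x := ⟨x.2.1.1, ((x.1, x.2.1.2.1), (x.2.1.2.2, x.2.2))⟩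
  invFun s := (s.2.1.1, ⟨s.1, (s.2.1.2, s.2.2.1)⟩, s.2.2.2)

def leftBlockEquiv : a × (Σ j, α j × β j) ≃ Σ j, (a × α j) × β j where
  toFun x := ⟨x.2.1, ((x.1, x.2.2.1), x.2.2.2)⟩
  invFun s := (s.2.1.1, ⟨s.1, (s.2.1.2, s.2.2)⟩)

def rightBlockEquiv : (Σ j, α j × β j) × c ≃ Σ j, α j × (β j × c) where
  toFun x := ⟨x.1.1, (x.1.2.1, (x.1.2.2, x.2))⟩
  invFun s := (⟨s.1, (s.2.1, s.2.2.1)⟩, s.2.2.2)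

variable {a c} (lam : ι → ℝ) (X : ∀ j, Matrix (a × α j) (a × α j) ℂ)
  (Y : ∀ j, Matrix (β j × c) (β j × c) ℂ)

lemma trC_blockState [Fintype c] :
    trC ((blockState lam X Y).submatrix (tripartiteBlockEquiv a c) (tripartiteBlockEquiv a c)) =
      (blockState lam X fun j => ptraceRight (Y j)).submatrix (leftBlockEquiv a)
        (leftBlockEquiv a) := by
  ext ⟨x, j, l, r⟩ ⟨y, j', l', r'⟩
  rcases eq_or_ne j j' with rfl | h
  · simp [trC, blockState, ptraceRight, tripartiteBlockEquiv, leftBlockEquiv, Finset.mul_sum]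
  · simp [trC, blockState, tripartiteBlockEquiv, leftBlockEquiv,
      blockDiagonal'_apply_ne _ _ _ h]

lemma ptraceLeft_blockState [Fintype a] :
    ptraceLeft ((blockState lam X Y).submatrix (tripartiteBlockEquiv a c)
        (tripartiteBlockEquiv a c)) =
      (blockState lam (fun j => ptraceLeft (X j)) Y).submatrix (rightBlockEquiv c)
        (rightBlockEquiv c) := by
  ext ⟨⟨j, l, r⟩, z⟩ ⟨⟨j', l', r'⟩, z'⟩
  rcases eq_or_ne j j' with rfl | h
  · simp [ptraceLeft, blockState, tripartiteBlockEquiv, rightBlockEquiv, Finset.mul_sum,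
      Finset.sum_mul]
  · simp [ptraceLeft, blockState, tripartiteBlockEquiv, rightBlockEquiv,
      blockDiagonal'_apply_ne _ _ _ h]

lemma trAC_blockState [Fintype a] [Fintype c] :
    trAC ((blockState lam X Y).submatrix (tripartiteBlockEquiv a c) (tripartiteBlockEquiv a c)) =
      blockState lam (fun j => ptraceLeft (X j)) fun j => ptraceRight (Y j) := by
  ext ⟨j, l, r⟩ ⟨j', l', r'⟩
  rcases eq_or_ne j j' with rfl | h
  · simp [trAC, blockState, ptraceLeft, ptraceRight, tripartiteBlockEquiv, Finset.mul_sum,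
      Finset.sum_mul]
    exact Finset.sum_comm
  · simp [trAC, blockState, tripartiteBlockEquiv, blockDiagonal'_apply_ne _ _ _ h]

end BlockState

theorem ssa_saturation_of_blockform_general {a c : Type*} [Fintype a] [Fintype c]
    [DecidableEq a] [DecidableEq c]
    {K : ℕ} (L R : Fin K → ℕ)
    (lam : Fin K → ℝ)
    (ρAL : ∀ j, Matrix (a × Fin (L j)) (a × Fin (L j)) ℂ)
    (ρRC : ∀ j, Matrix (Fin (R j) × c) (Fin (R j) × c) ℂ)
    (hAL : ∀ j, IsDensity (ρAL j)) (hRC : ∀ j, IsDensity (ρRC j))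
    (ρABC : Matrix (a × (Σ j : Fin K, Fin (L j) × Fin (R j)) × c)
            (a × (Σ j : Fin K, Fin (L j) × Fin (R j)) × c) ℂ)
    (hblock : ∀ (x y : a) (c1 c2 : c) (j j' : Fin K) (l : Fin (L j)) (r : Fin (R j))
        (l' : Fin (L j')) (r' : Fin (R j')),
        ρABC (x, ⟨j, (l, r)⟩, c1) (y, ⟨j', (l', r')⟩, c2) =
          if h : j = j' then
            (lam j : ℂ) * ρAL j (x, l) (y, Fin.cast (congrArg L h.symm) l') *
              ρRC j (r, c1) (Fin.cast (congrArg R h.symm) r', c2)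
          else 0) :
    vNEntropy (trC ρABC) + vNEntropy (ptraceLeft ρABC) =
      vNEntropy ρABC + vNEntropy (trAC ρABC) := by
  have hρ : ρABC = (blockState lam ρAL ρRC).submatrix (tripartiteBlockEquiv a c)
      (tripartiteBlockEquiv a c) := by
    ext ⟨x, ⟨j, l, r⟩, z⟩ ⟨y, ⟨j', l', r'⟩, z'⟩
    rw [hblock]
    rcases eq_or_ne j j' with rfl | h
    · simp [blockState, tripartiteBlockEquiv, mul_assoc]
    · simp [blockState, tripartiteBlockEquiv, h, blockDiagonal'_apply_ne _ _ _ h]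
  have hA j := (hAL j).1.isHermitian
  have hC j := (hRC j).1.isHermitian
  have hL j := (hA j).ptraceLeft
  have hR j := (hC j).ptraceRight
  have hLtr j : (ptraceLeft (ρAL j)).trace = 1 := (trace_ptraceLeft _).trans (hAL j).2
  have hRtr j : (ptraceRight (ρRC j)).trace = 1 := (trace_ptraceRight _).trans (hRC j).2
  rw [hρ, trC_blockState, ptraceLeft_blockState, trAC_blockState, vNEntropy_submatrix_equiv,
    vNEntropy_submatrix_equiv, vNEntropy_submatrix_equiv,
    vNEntropy_blockState lam hA (fun j => (hAL j).2) hR hRtr,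
    vNEntropy_blockState lam hL hLtr hC (fun j => (hRC j).2),
    vNEntropy_blockState lam hA (fun j => (hAL j).2) hC (fun j => (hRC j).2),
    vNEntropy_blockState lam hL hLtr hR hRtr, ← Finset.sum_add_distrib, ← Finset.sum_add_distrib]
  exact Finset.sum_congr rfl fun j _ => by ring

/-- sufficiency direction of the strong subadditivity saturation condition:
a block-diagonal state `⨁_j λ_j ρ_{A L_j} ⊗ ρ_{R_j C}` saturates SSA. -/
theorem ssa_saturation_of_blockform {a c : Type*} [Fintype a] [Fintype c]
    [DecidableEq a] [DecidableEq c]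
    {K : ℕ} (L R : Fin K → ℕ)
    (lam : Fin K → ℝ) (hpos : ∀ j, 0 ≤ lam j) (hsum : ∑ j, lam j = 1)
    (ρAL : ∀ j, Matrix (a × Fin (L j)) (a × Fin (L j)) ℂ)
    (ρRC : ∀ j, Matrix (Fin (R j) × c) (Fin (R j) × c) ℂ)
    (hAL : ∀ j, IsDensity (ρAL j)) (hRC : ∀ j, IsDensity (ρRC j))
    (ρABC : Matrix (a × (Σ j : Fin K, Fin (L j) × Fin (R j)) × c)
            (a × (Σ j : Fin K, Fin (L j) × Fin (R j)) × c) ℂ)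
    (hblock : ∀ (x y : a) (c1 c2 : c) (j j' : Fin K) (l : Fin (L j)) (r : Fin (R j))
        (l' : Fin (L j')) (r' : Fin (R j')),
        ρABC (x, ⟨j, (l, r)⟩, c1) (y, ⟨j', (l', r')⟩, c2) =
          if h : j = j' then
            (lam j : ℂ) * ρAL j (x, l) (y, Fin.cast (congrArg L h.symm) l') *
              ρRC j (r, c1) (Fin.cast (congrArg R h.symm) r', c2)
          else 0) :
    vNEntropy (trC ρABC) + vNEntropy (ptraceLeft ρABC) =
      vNEntropy ρABC + vNEntropy (trAC ρABC) :=
  ssa_saturation_of_blockform_general L R lam ρAL ρRC hAL hRC ρABC hblock
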